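/- arXiv:math/0005166 — 8 statements merged into one kernel-verified Lean document; each statement's English description precedes it below -/
import Mathlib

section
/- Let H be a real Hilbert space with dim H ≥ 3. Let T, S : H̲ → H̲ be bijective transformations of the set of rays of H (in the real case the ray of x is {x, −x}) satisfying T x̲ · S y̲ = x̲ · y̲ for all rays x̲, y̲ ∈ H̲, where x̲ · y̲ = |⟨x, y⟩|. Then there exist bounded invertible linear operators U, V : H → H such that T x̲ is the ray of Ux and S x̲ is the ray of Vx for every x ∈ H, and V = (U*)⁻¹, i.e. ⟨Ux, Vy⟩ = ⟨x, y⟩ for all x, y ∈ H. -/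
/-!
Write `T (ray x) = ray (f x)` and `S (ray y) = ray (g y)`, so that `⟪f x, g y⟫ = ±⟪x, y⟫`.
Since `g` meets every ray, testing against `g y` shows that one of the four vectors
`f (x + x') ± f x ± f x'` vanishes, i.e. `f (x + x') = ±(f x ± f x')`; expanding
`⟪f (x + x'), g y⟫ ^ 2` then shows that the sign relating `⟪f x, g y⟫ ⟪f x', g y⟫` to
`⟪x, y⟫ ⟪x', y⟫` does not depend on `y`. Fixing `a ≠ 0` and choosing `U x = ±f x` so that this
sign is `+1` for the pair `(a, x)` gives `⟪U x, ⟪f a, g y⟫ • g y⟫ = ⟪x, ⟪a, y⟫ • y⟫`; these test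
vectors separate points, so `U` is linear, and bounded by the closed graph theorem. For each `y`
the linear functionals `⟪U ·, g y⟫` and `⟪·, y⟫` have equal squares, so they agree up to a sign,
which defines `V y = ±g y` with `⟪U x, V y⟫ = ⟪x, y⟫`; the same argument makes `V` bounded linear.
-/

local notation "⟪" x ", " y "⟫" => @inner ℝ _ _ x y

/-- The ray associated with a vector `x` in a real space: `{x, -x}`. -/
def ray {H : Type*} [NormedAddCommGroup H] [InnerProductSpace ℝ H] (x : H) : Set H :=
  {x, -x}

/-- The set of all rays of `H`. -/
abbrev RaySpace (H : Type*) [NormedAddCommGroup H] [InnerProductSpace ℝ H] : Type _ :=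
  {s : Set H // ∃ x : H, s = ray x}

section Ray

variable {E : Type*} [NormedAddCommGroup E] [InnerProductSpace ℝ E]

theorem mem_ray_iff {v w : E} : v ∈ ray w ↔ v = w ∨ v = -w := Iff.rfl

theorem mem_ray_self (v : E) : v ∈ ray v := Or.inl rfl

theorem ray_eq_ray_iff {v w : E} : ray v = ray w ↔ v ∈ ray w := by
  refine ⟨fun h => h ▸ mem_ray_self v, fun h => ?_⟩
  rcases mem_ray_iff.mp h with rfl | rfl
  · rfl
  · simp only [ray, neg_neg, Set.pair_comm]

theorem inner_sq_eq_of_mem_ray {v w : E} (h : v ∈ ray w) (z : E) : ⟪v, z⟫ ^ 2 = ⟪w, z⟫ ^ 2 := by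
  rcases mem_ray_iff.mp h with rfl | rfl <;> simp [inner_neg_left]

theorem mem_ray_of_mem_ray_of_mem_ray {u v w : E} (hu : u ∈ ray w) (hv : v ∈ ray w) :
    u ∈ ray v :=
  ray_eq_ray_iff.mp ((ray_eq_ray_iff.mpr hu).trans (ray_eq_ray_iff.mpr hv).symm)

def RaySurjective {α : Type*} (f : α → E) : Prop :=
  ∀ v, ∃ x, v ∈ ray (f x)

theorem RaySurjective.of_mem_ray {α : Type*} {f g : α → E} (hf : RaySurjective f)
    (hg : ∀ x, g x ∈ ray (f x)) : RaySurjective g := fun v => by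
  obtain ⟨x, hx⟩ := hf v
  exact ⟨x, mem_ray_of_mem_ray_of_mem_ray hx (hg x)⟩

theorem RaySurjective.surjective {A : E →L[ℝ] E} (hA : RaySurjective A) :
    Function.Surjective A := fun v => by
  obtain ⟨x, rfl | rfl⟩ := hA v
  exacts [⟨x, rfl⟩, ⟨-x, map_neg A x⟩]

theorem exists_eq_zero_of_forall_prod_inner_eq_zero {ι : Type*} [Fintype ι] (w : ι → E)
    (h : ∀ v, ∏ i, ⟪w i, v⟫ = 0) : ∃ i, w i = 0 := by
  by_contra! hw
  obtain ⟨v, hv⟩ := Module.Dual.exists_forall_ne_zero_of_forall_exists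
    (fun i => innerₗ E (w i)) fun i => ⟨w i, inner_self_ne_zero.mpr (hw i)⟩
  exact Finset.prod_ne_zero_iff.mpr (fun i _ => hv i) (h v)

theorem RaySurjective.exists_eq_zero_of_forall_prod_inner_eq_zero {α ι : Type*} [Fintype ι]
    {g : α → E} (hg : RaySurjective g) (w : ι → E) (h : ∀ y, ∏ i, ⟪w i, g y⟫ = 0) :
    ∃ i, w i = 0 :=
  _root_.exists_eq_zero_of_forall_prod_inner_eq_zero w fun v => by
    obtain ⟨y, rfl | rfl⟩ := hg v
    · exact h y
    · simp only [inner_neg_right, Finset.prod_neg, h y, mul_zero]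

theorem RaySurjective.eq_zero_of_forall_inner_eq_zero {α : Type*} {g : α → E}
    (hg : RaySurjective g) {w : E} (h : ∀ y, ⟪w, g y⟫ = 0) : w = 0 :=
  (hg.exists_eq_zero_of_forall_prod_inner_eq_zero (fun _ : Unit => w)
    (by simpa using h)).choose_spec

end Ray

theorem LinearMap.eq_or_eq_neg_of_sq_eq_sq {R M : Type*} [CommRing R] [IsDomain R]
    [NeZero (2 : R)] [AddCommGroup M] [Module R M] (ℓ m : M →ₗ[R] R)
    (h : ∀ x, ℓ x ^ 2 = m x ^ 2) : ℓ = m ∨ ℓ = -m := by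
  have polar : ∀ x x', ℓ x * ℓ x' = m x * m x' := fun x x' => by
    have hxx' := h (x + x')
    rw [map_add, map_add, add_sq, add_sq, h x, h x'] at hxx'
    exact mul_left_cancel₀ (two_ne_zero (α := R)) (by linear_combination hxx')
  by_cases hm : m = 0
  · left
    ext x
    simpa [hm] using h x
  obtain ⟨x₀, hx₀⟩ : ∃ x₀, m x₀ ≠ 0 := by
    by_contra! hm'
    exact hm (LinearMap.ext hm')
  rcases sq_eq_sq_iff_eq_or_eq_neg.mp (h x₀) with h₀ | h₀ <;> [left; right] <;> ext x <;>
    apply mul_right_cancel₀ hx₀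
  · linear_combination polar x x₀ - ℓ x * h₀
  · simp only [LinearMap.neg_apply]
    linear_combination -polar x x₀ + ℓ x * h₀

theorem exists_continuousLinearMap_of_inner_eq {E F ι : Type*} [NormedAddCommGroup E]
    [InnerProductSpace ℝ E] [CompleteSpace E] [NormedAddCommGroup F] [InnerProductSpace ℝ F]
    [CompleteSpace F] (A : E → F) (G : ι → F) (φ : ι → E)
    (hG : ∀ w, (∀ i, ⟪w, G i⟫ = 0) → w = 0) (h : ∀ x i, ⟪A x, G i⟫ = ⟪x, φ i⟫) :
    ∃ B : E →L[ℝ] F, ⇑B = A := by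
  have ext : ∀ u w, (∀ i, ⟪u, G i⟫ = ⟪w, G i⟫) → u = w := fun u w huw =>
    sub_eq_zero.mp (hG _ fun i => by rw [inner_sub_left, huw, sub_self])
  let B : E →ₗ[ℝ] F :=
    { toFun := A
      map_add' := fun x x' => ext _ _ fun i => by simp only [inner_add_left, h]
      map_smul' := fun c x => ext _ _ fun i => by
        simp only [real_inner_smul_left, h, RingHom.id_apply] }
  have hgraph : (B.graph : Set (E × F)) = ⋂ i, {p | ⟪p.2, G i⟫ = ⟪p.1, φ i⟫} := by
    ext ⟨x, u⟩
    simp only [SetLike.mem_coe, LinearMap.mem_graph_iff, Set.mem_iInter, Set.mem_ofPred_eq]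
    exact ⟨fun hu i => hu ▸ h x i, fun hu => ext _ _ fun i => (hu i).trans (h x i).symm⟩
  refine ⟨⟨B, B.continuous_of_isClosed_graph ?_⟩, rfl⟩
  rw [hgraph]
  exact isClosed_iInter fun i =>
    isClosed_eq (continuous_snd.inner continuous_const) (continuous_fst.inner continuous_const)

theorem injective_of_inner_map_map_eq {E : Type*} [NormedAddCommGroup E] [InnerProductSpace ℝ E]
    {U V : E → E} (h : ∀ x y, ⟪U x, V y⟫ = ⟪x, y⟫) : Function.Injective U := fun x x' hxx' =>
  ext_inner_right ℝ fun y => by rw [← h x, ← h x', hxx']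

section SquaredInnerProducts

variable {H : Type*} [NormedAddCommGroup H] [InnerProductSpace ℝ H] {f g : H → H}

theorem map_zero_of_sq_inner_eq (hfg : ∀ x y, ⟪f x, g y⟫ ^ 2 = ⟪x, y⟫ ^ 2)
    (hg : RaySurjective g) : f 0 = 0 :=
  hg.eq_zero_of_forall_inner_eq_zero fun y => by simpa using hfg 0 y

theorem map_add_mem_ray (hfg : ∀ x y, ⟪f x, g y⟫ ^ 2 = ⟪x, y⟫ ^ 2) (hg : RaySurjective g)
    (x x' : H) : ∃ v ∈ ray (f x'), f (x + x') ∈ ray (f x + v) := by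
  set A := f (x + x')
  set B := f x
  set C := f x'
  have hprod : ∀ y, ⟪A - (B + C), g y⟫ * ⟪A + (B + C), g y⟫ *
      (⟪A - (B - C), g y⟫ * ⟪A + (B - C), g y⟫) = 0 := fun y => by
    have hA := hfg (x + x') y
    have hB := hfg x y
    have hC := hfg x' y
    rw [inner_add_left] at hA
    simp only [inner_add_left, inner_sub_left]
    -- With `a, b, c = ⟪A, g y⟫, ⟪B, g y⟫, ⟪C, g y⟫` and `p, q = ⟪x, y⟫, ⟪x', y⟫` the product is
    -- `(a² - (b + c)²) (a² - (b - c)²)`, which vanishes when `a² = (p + q)², b² = p², c² = q²`.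
    linear_combination
      (⟪A, g y⟫ ^ 2 + (⟪x, y⟫ + ⟪x', y⟫) ^ 2 - 2 * (⟪B, g y⟫ ^ 2 + ⟪C, g y⟫ ^ 2)) * hA +
      (-2 * (⟪x, y⟫ + ⟪x', y⟫) ^ 2 + ⟪B, g y⟫ ^ 2 + ⟪x, y⟫ ^ 2 - 2 * ⟪C, g y⟫ ^ 2) * hB +
      (-2 * (⟪x, y⟫ + ⟪x', y⟫) ^ 2 + ⟪C, g y⟫ ^ 2 + ⟪x', y⟫ ^ 2 - 2 * ⟪x, y⟫ ^ 2) * hC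
  obtain ⟨i, hi⟩ := hg.exists_eq_zero_of_forall_prod_inner_eq_zero
    ![A - (B + C), A + (B + C), A - (B - C), A + (B - C)]
    (by simpa [Fin.prod_univ_four, mul_assoc] using hprod)
  fin_cases i <;> simp only [Fin.zero_eta, Fin.mk_one, Fin.reduceFinMk, Matrix.cons_val] at hi
  · exact ⟨C, mem_ray_self C, Or.inl (sub_eq_zero.mp hi)⟩
  · exact ⟨C, mem_ray_self C, Or.inr (eq_neg_of_add_eq_zero_left hi)⟩
  · exact ⟨-C, Or.inr rfl, Or.inl (by rw [← sub_eq_add_neg]; exact sub_eq_zero.mp hi)⟩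
  · exact ⟨-C, Or.inr rfl, Or.inr (by rw [← sub_eq_add_neg]; exact eq_neg_of_add_eq_zero_left hi)⟩

theorem exists_mem_ray_inner_mul_inner_eq (hfg : ∀ x y, ⟪f x, g y⟫ ^ 2 = ⟪x, y⟫ ^ 2)
    (hg : RaySurjective g) (x x' : H) :
    ∃ v ∈ ray (f x'), ∀ y, ⟪f x, g y⟫ * ⟪v, g y⟫ = ⟪x, y⟫ * ⟪x', y⟫ := by
  obtain ⟨v, hv, hadd⟩ := map_add_mem_ray hfg hg x x'
  refine ⟨v, hv, fun y => ?_⟩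
  have hsum := hfg (x + x') y
  rw [inner_sq_eq_of_mem_ray hadd, inner_add_left, inner_add_left] at hsum
  have hx := hfg x y
  have hx' := (inner_sq_eq_of_mem_ray hv (g y)).trans (hfg x' y)
  linear_combination hsum / 2 - hx / 2 - hx' / 2

theorem exists_continuousLinearMap_mem_ray [CompleteSpace H] [Nontrivial H]
    (hfg : ∀ x y, ⟪f x, g y⟫ ^ 2 = ⟪x, y⟫ ^ 2) (hf : RaySurjective f) (hg : RaySurjective g) :
    ∃ U : H →L[ℝ] H, ∀ x, U x ∈ ray (f x) := by
  obtain ⟨a, ha⟩ := exists_ne (0 : H)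
  choose U hUf hU using exists_mem_ray_inner_mul_inner_eq hfg hg a
  have hG : ∀ w, (∀ y, ⟪w, ⟪f a, g y⟫ • g y⟫ = 0) → w = 0 := by
    intro w hw
    obtain ⟨x, hx⟩ := hf w
    have hxU : w ∈ ray (U x) := mem_ray_of_mem_ray_of_mem_ray hx (hUf x)
    have hax : ∀ y, ⟪a, y⟫ * ⟪x, y⟫ = 0 := fun y => by
      rw [← hU x y]
      rcases mem_ray_iff.mp hxU with rfl | rfl <;>
        simpa [real_inner_smul_right, inner_neg_left] using hw y
    obtain ⟨i, hi⟩ := exists_eq_zero_of_forall_prod_inner_eq_zero ![a, x] (by simpa using hax)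
    fin_cases i
    · exact absurd hi ha
    · rw [show x = 0 from hi, map_zero_of_sq_inner_eq hfg hg] at hx
      simpa [mem_ray_iff] using hx
  obtain ⟨B, hB⟩ := exists_continuousLinearMap_of_inner_eq U (fun y => ⟪f a, g y⟫ • g y)
    (fun y => ⟪a, y⟫ • y) hG fun x y => by rw [real_inner_smul_right, real_inner_smul_right, hU]
  exact ⟨B, fun x => hB ▸ hUf x⟩

theorem exists_continuousLinearMap_inner_map_map_eq [CompleteSpace H]
    (hfg : ∀ x y, ⟪f x, g y⟫ ^ 2 = ⟪x, y⟫ ^ 2) (hf : RaySurjective f) (U : H →L[ℝ] H)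
    (hU : ∀ x, U x ∈ ray (f x)) :
    ∃ V : H →L[ℝ] H, (∀ y, V y ∈ ray (g y)) ∧ ∀ x y, ⟪U x, V y⟫ = ⟪x, y⟫ := by
  have hV : ∀ y, ∃ v ∈ ray (g y), ∀ x, ⟪U x, v⟫ = ⟪x, y⟫ := fun y => by
    have hsq : ∀ x, ⟪g y, U x⟫ ^ 2 = ⟪y, x⟫ ^ 2 := fun x => by
      rw [real_inner_comm, inner_sq_eq_of_mem_ray (hU x), hfg, real_inner_comm]
    rcases ((innerₗ H (g y)).comp (U : H →ₗ[ℝ] H)).eq_or_eq_neg_of_sq_eq_sq (innerₗ H y)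
      (by simpa using hsq) with h | h
    · exact ⟨g y, mem_ray_self _, fun x => by
        simpa [real_inner_comm] using LinearMap.congr_fun h x⟩
    · exact ⟨-g y, Or.inr rfl, fun x => by
        simpa [real_inner_comm, inner_neg_right, neg_eq_iff_eq_neg] using
          LinearMap.congr_fun h x⟩
  choose V hVg hUV using hV
  obtain ⟨B, hB⟩ := exists_continuousLinearMap_of_inner_eq V U id
    (fun _ => (hf.of_mem_ray hU).eq_zero_of_forall_inner_eq_zero)
    fun y x => by rw [real_inner_comm, hUV, id, real_inner_comm]
  exact ⟨B, hB ▸ hVg, fun x y => hB ▸ hUV y x⟩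

theorem exists_continuousLinearEquiv_inner_map_map_eq [CompleteSpace H]
    (hfg : ∀ x y, ⟪f x, g y⟫ ^ 2 = ⟪x, y⟫ ^ 2) (hf : RaySurjective f) (hg : RaySurjective g) :
    ∃ U V : H ≃L[ℝ] H,
      (∀ x, U x ∈ ray (f x)) ∧ (∀ y, V y ∈ ray (g y)) ∧ ∀ x y, ⟪U x, V y⟫ = ⟪x, y⟫ := by
  rcases subsingleton_or_nontrivial H with hH | hH
  · exact ⟨.refl ℝ H, .refl ℝ H, fun x => Or.inl (Subsingleton.elim _ _),
      fun y => Or.inl (Subsingleton.elim _ _), fun x y => rfl⟩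
  obtain ⟨U, hU⟩ := exists_continuousLinearMap_mem_ray hfg hf hg
  obtain ⟨V, hV, hUV⟩ := exists_continuousLinearMap_inner_map_map_eq hfg hf U hU
  have hVU : ∀ y x, ⟪V y, U x⟫ = ⟪y, x⟫ := fun y x => by
    rw [real_inner_comm, hUV, real_inner_comm]
  refine ⟨.ofBijective U ?_ ?_, .ofBijective V ?_ ?_, hU, hV, hUV⟩
  · exact LinearMap.ker_eq_bot.mpr (injective_of_inner_map_map_eq hUV)
  · exact LinearMap.range_eq_top.mpr (hf.of_mem_ray hU).surjective
  · exact LinearMap.ker_eq_bot.mpr (injective_of_inner_map_map_eq hVU)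
  · exact LinearMap.range_eq_top.mpr (hg.of_mem_ray hV).surjective

end SquaredInnerProducts

theorem RaySurjective.of_surjective {H : Type*} [NormedAddCommGroup H] [InnerProductSpace ℝ H]
    {T : RaySpace H → RaySpace H} (hT : Function.Surjective T) {f : H → H}
    (hf : ∀ x, (T ⟨ray x, x, rfl⟩).1 = ray (f x)) : RaySurjective f := fun v => by
  obtain ⟨⟨_, x, rfl⟩, hx⟩ := hT ⟨ray v, v, rfl⟩
  exact ⟨x, ray_eq_ray_iff.mp ((congrArg Subtype.val hx).symm.trans (hf x))⟩

theorem wigner_pairs_of_ray_transformations_real_general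
    {H : Type*} [NormedAddCommGroup H] [InnerProductSpace ℝ H] [CompleteSpace H]
    (T S : RaySpace H → RaySpace H)
    (hT : Function.Bijective T) (hS : Function.Bijective S)
    (h : ∀ x y u v : H, u ∈ (T ⟨ray x, x, rfl⟩).1 → v ∈ (S ⟨ray y, y, rfl⟩).1 →
      |⟪u, v⟫| = |⟪x, y⟫|) :
    ∃ U V : H ≃L[ℝ] H,
      (∀ x : H, (T ⟨ray x, x, rfl⟩).1 = ray (U x)) ∧
      (∀ x : H, (S ⟨ray x, x, rfl⟩).1 = ray (V x)) ∧
      (∀ x y : H, ⟪U x, V y⟫ = ⟪x, y⟫) := by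
  choose f hf using fun x : H => (T ⟨ray x, x, rfl⟩).2
  choose g hg using fun y : H => (S ⟨ray y, y, rfl⟩).2
  have hfg : ∀ x y, ⟪f x, g y⟫ ^ 2 = ⟪x, y⟫ ^ 2 := fun x y =>
    (sq_eq_sq_iff_abs_eq_abs _ _).mpr
      (h x y _ _ (hf x ▸ mem_ray_self _) (hg y ▸ mem_ray_self _))
  obtain ⟨U, V, hU, hV, hUV⟩ := exists_continuousLinearEquiv_inner_map_map_eq hfg
    (.of_surjective hT.2 hf) (.of_surjective hS.2 hg)
  exact ⟨U, V, fun x => (hf x).trans (ray_eq_ray_iff.mpr (hU x)).symm,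
    fun y => (hg y).trans (ray_eq_ray_iff.mpr (hV y)).symm, hUV⟩

theorem wigner_pairs_of_ray_transformations_real
    {H : Type*} [NormedAddCommGroup H] [InnerProductSpace ℝ H] [CompleteSpace H]
    (hdim : 3 ≤ Module.rank ℝ H)
    (T S : RaySpace H → RaySpace H)
    (hT : Function.Bijective T) (hS : Function.Bijective S)
    (h : ∀ x y u v : H, u ∈ (T ⟨ray x, x, rfl⟩).1 → v ∈ (S ⟨ray y, y, rfl⟩).1 →
      |⟪u, v⟫| = |⟪x, y⟫|) :
    ∃ U V : H ≃L[ℝ] H,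
      (∀ x : H, (T ⟨ray x, x, rfl⟩).1 = ray (U x)) ∧
      (∀ x : H, (S ⟨ray x, x, rfl⟩).1 = ray (V x)) ∧
      (∀ x y : H, ⟪U x, V y⟫ = ⟪x, y⟫) :=
  wigner_pairs_of_ray_transformations_real_general T S hT hS h
end

section
/- Let H be a complex Hilbert space and let T, S : H → H be (not necessarily linear or continuous) maps satisfying |⟨Tx, Sy⟩| = |⟨x, y⟩| for all x, y ∈ H. Assume both T and S are almost surjective, i.e. for every y ∈ H there exist x ∈ H and λ ∈ ℂ with |λ| = 1 such that y = λ Tx, and likewise for S. Then sup{ ‖Tx‖ · ‖Sx‖ : x ∈ H, ‖x‖ = 1 } < ∞. -/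
/-
STATEMENT 5: If T, S : H → H satisfy |⟨Tx, Sy⟩| = |⟨x, y⟩| and both are almost
surjective, then sup{‖Tx‖·‖Sx‖ : ‖x‖ = 1} < ∞.
-/

local notation "⟪" x ", " y "⟫" => @inner ℂ _ _ x y

/-- A map `T` is almost surjective if every vector is a unimodular multiple of some `T x`. -/
def AlmostSurjective {H : Type*} [NormedAddCommGroup H] [InnerProductSpace ℂ H]
    (T : H → H) : Prop :=
  ∀ y : H, ∃ (x : H) (c : ℂ), ‖c‖ = 1 ∧ y = c • T x

theorem norm_product_bounded_on_unit_sphere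
    {H : Type*} [NormedAddCommGroup H] [InnerProductSpace ℂ H] [CompleteSpace H]
    (T S : H → H)
    (h : ∀ x y : H, ‖⟪T x, S y⟫‖ = ‖⟪x, y⟫‖)
    (hT : AlmostSurjective T) (hS : AlmostSurjective S) :
    ∃ M : ℝ, ∀ x : H, ‖x‖ = 1 → ‖T x‖ * ‖S x‖ ≤ M := by
  -- Banach–Steinhaus for the family `⟪T x, ·⟫`, `x` on the unit sphere.
  obtain ⟨C₁, hC₁⟩ :=
    banach_steinhaus (ι := {x : H // ‖x‖ = 1})
      (g := fun x => innerSL ℂ (T x.1))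
      (by
        intro z
        obtain ⟨v, c, hc, hz⟩ := hS z
        refine ⟨‖v‖, fun x => ?_⟩
        have : innerSL ℂ (T x.1) z = c * ⟪T x.1, S v⟫ := by
          rw [innerSL_apply_apply, hz, inner_smul_right]
        rw [this, norm_mul, hc, one_mul, h]
        calc ‖⟪(x : H), v⟫‖ ≤ ‖(x : H)‖ * ‖v‖ := norm_inner_le_norm _ _
          _ = ‖v‖ := by rw [x.2, one_mul])
  -- Banach–Steinhaus for the family `⟪S x, ·⟫`, `x` on the unit sphere.
  obtain ⟨C₂, hC₂⟩ :=
    banach_steinhaus (ι := {x : H // ‖x‖ = 1})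
      (g := fun x => innerSL ℂ (S x.1))
      (by
        intro z
        obtain ⟨u, c, hc, hz⟩ := hT z
        refine ⟨‖u‖, fun x => ?_⟩
        have : innerSL ℂ (S x.1) z = c * ⟪S x.1, T u⟫ := by
          rw [innerSL_apply_apply, hz, inner_smul_right]
        rw [this, norm_mul, hc, one_mul, norm_inner_symm, h]
        calc ‖⟪u, (x : H)⟫‖ ≤ ‖u‖ * ‖(x : H)‖ := norm_inner_le_norm _ _
          _ = ‖u‖ := by rw [x.2, mul_one])
  refine ⟨C₁ * C₂, fun x hx => ?_⟩
  have h₁ : ‖T x‖ ≤ C₁ := by simpa [innerSL_apply_norm] using hC₁ ⟨x, hx⟩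
  have h₂ : ‖S x‖ ≤ C₂ := by simpa [innerSL_apply_norm] using hC₂ ⟨x, hx⟩
  exact mul_le_mul h₁ h₂ (norm_nonneg _) ((norm_nonneg _).trans h₁)
end

section
/- Let H be a complex Hilbert space and let U, V : H → H be surjective linear maps (not assumed continuous) satisfying ⟨Ux, Vy⟩ = ⟨x, y⟩ for all x, y ∈ H. Then U and V are continuous (bounded). -/
/-
STATEMENT 10: Surjective linear maps U, V on a complex Hilbert space with
⟨Ux, Vy⟩ = ⟨x, y⟩ for all x, y are automatically continuous.
-/

local notation "⟪" x ", " y "⟫" => @inner ℂ _ _ x y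

theorem automatic_continuity
    {H : Type*} [NormedAddCommGroup H] [InnerProductSpace ℂ H] [CompleteSpace H]
    (U V : H →ₗ[ℂ] H)
    (hU : Function.Surjective U) (hV : Function.Surjective V)
    (h : ∀ x y : H, ⟪U x, V y⟫ = ⟪x, y⟫) :
    Continuous U ∧ Continuous V := by
  constructor
  · apply U.continuous_of_seq_closed_graph
    intro u x y hu hUu
    apply ext_inner_right ℂ
    intro z
    obtain ⟨w, rfl⟩ := hV z
    have h1 : Filter.Tendsto (fun n => ⟪U (u n), V w⟫) Filter.atTop (nhds ⟪y, V w⟫) :=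
      hUu.inner tendsto_const_nhds
    have h2 : Filter.Tendsto (fun n => ⟪u n, w⟫) Filter.atTop (nhds ⟪x, w⟫) :=
      hu.inner tendsto_const_nhds
    simp only [h] at h1
    rw [h, tendsto_nhds_unique h1 h2]
  · apply V.continuous_of_seq_closed_graph
    intro u x y hu hVu
    apply ext_inner_left ℂ
    intro z
    obtain ⟨w, rfl⟩ := hU z
    have h1 : Filter.Tendsto (fun n => ⟪U w, V (u n)⟫) Filter.atTop (nhds ⟪U w, y⟫) :=
      (tendsto_const_nhds : Filter.Tendsto _ _ (nhds (U w))).inner hVu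
    have h2 : Filter.Tendsto (fun n => ⟪w, u n⟫) Filter.atTop (nhds ⟪w, x⟫) :=
      (tendsto_const_nhds : Filter.Tendsto _ _ (nhds w)).inner hu
    simp only [h] at h1
    rw [h, tendsto_nhds_unique h1 h2]
end

section
/- Let H be a complex Hilbert space with dim H ≥ 3 and let φ : F(H) → B(H) be a linear map such that φ(P) is an idempotent (φ(P)² = φ(P)) for every finite-rank orthogonal projection P on H. Then φ is a Jordan homomorphism, i.e. φ(A²) = φ(A)² for every A ∈ F(H). -/
/-
STATEMENT 13: A linear map φ : F(H) → B(H) sending finite-rank orthogonal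
projections to idempotents is a Jordan homomorphism (dim H ≥ 3).
-/

/-- The submodule of finite-rank operators `F(H)` inside `B(H)`. -/
noncomputable def finiteRankOps (H : Type*) [NormedAddCommGroup H]
    [InnerProductSpace ℂ H] : Submodule ℂ (H →L[ℂ] H) where
  carrier := {A | FiniteDimensional ℂ (LinearMap.range (A : H →ₗ[ℂ] H))}
  zero_mem' := by
    have h0 : LinearMap.range ((0 : H →L[ℂ] H) : H →ₗ[ℂ] H) = ⊥ := by
      ext z; simp [LinearMap.mem_range, eq_comm]
    show FiniteDimensional ℂ (LinearMap.range ((0 : H →L[ℂ] H) : H →ₗ[ℂ] H))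
    rw [h0]; infer_instance
  add_mem' := by
    intro A B hA hB
    have hle : LinearMap.range ((A + B : H →L[ℂ] H) : H →ₗ[ℂ] H) ≤
        LinearMap.range (A : H →ₗ[ℂ] H) ⊔ LinearMap.range (B : H →ₗ[ℂ] H) := by
      rintro _ ⟨x, rfl⟩
      show A x + B x ∈ _
      exact Submodule.add_mem_sup ⟨x, rfl⟩ ⟨x, rfl⟩
    haveI : FiniteDimensional ℂ (LinearMap.range (A : H →ₗ[ℂ] H)) := hA
    haveI : FiniteDimensional ℂ (LinearMap.range (B : H →ₗ[ℂ] H)) := hB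
    exact Submodule.finiteDimensional_of_le hle
  smul_mem' := by
    intro c A hA
    have hle : LinearMap.range ((c • A : H →L[ℂ] H) : H →ₗ[ℂ] H) ≤
        LinearMap.range (A : H →ₗ[ℂ] H) := by
      rintro _ ⟨x, rfl⟩
      show c • A x ∈ _
      exact Submodule.smul_mem _ c ⟨x, rfl⟩
    haveI : FiniteDimensional ℂ (LinearMap.range (A : H →ₗ[ℂ] H)) := hA
    exact Submodule.finiteDimensional_of_le hle

section Aux

open scoped InnerProductSpace ComplexConjugate

variable {H : Type*} [NormedAddCommGroup H] [InnerProductSpace ℂ H]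

noncomputable def rankOne (e : H) : H →L[ℂ] H := (innerSL ℂ e).smulRight e

lemma rankOne_apply (e x : H) : rankOne e x = ⟪e, x⟫_ℂ • e := rfl

lemma rankOne_isSelfAdjoint [CompleteSpace H] (e : H) : IsSelfAdjoint (rankOne e) := by
  rw [ContinuousLinearMap.isSelfAdjoint_iff_isSymmetric]
  intro x y
  simp [rankOne_apply, inner_smul_left, inner_smul_right, mul_comm]

lemma rankOne_mul_rankOne (e f : H) :
    rankOne e * rankOne f = ⟪e, f⟫_ℂ • (innerSL ℂ f).smulRight e := by
  ext x
  simp [rankOne_apply, ContinuousLinearMap.mul_apply, inner_smul_right]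
  rw [smul_comm]

lemma rankOne_mul_self (e : H) (he : ‖e‖ = 1) : rankOne e * rankOne e = rankOne e := by
  rw [rankOne_mul_rankOne, inner_self_eq_norm_sq_to_K (𝕜 := ℂ), he]
  simp [rankOne]

lemma rankOne_mul_orth (e f : H) (hef : ⟪e, f⟫_ℂ = 0) : rankOne e * rankOne f = 0 := by
  rw [rankOne_mul_rankOne, hef, zero_smul]


lemma rankOne_mem (e : H) : rankOne e ∈ finiteRankOps H := by
  have hle : LinearMap.range (rankOne e : H →ₗ[ℂ] H) ≤ ℂ ∙ e := by
    rintro _ ⟨x, rfl⟩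
    exact Submodule.smul_mem _ _ (Submodule.mem_span_singleton_self e)
  haveI : FiniteDimensional ℂ (ℂ ∙ e : Submodule ℂ H) := by infer_instance
  exact Submodule.finiteDimensional_of_le hle

lemma exists_decomp [CompleteSpace H] (A : H →L[ℂ] H) (hA : A ∈ finiteRankOps H)
    (hsa : IsSelfAdjoint A) :
    ∃ (n : ℕ) (e : Fin n → H) (μ : Fin n → ℝ), Orthonormal ℂ e ∧
      A = ∑ i, (μ i : ℂ) • rankOne (e i) := by
  haveI : FiniteDimensional ℂ (LinearMap.range (A : H →ₗ[ℂ] H)) := hA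
  set V : Submodule ℂ H := LinearMap.range (A : H →ₗ[ℂ] H) with hV
  have hmaps : ∀ x ∈ V, A x ∈ V := fun x _ => LinearMap.mem_range_self _ x
  set T : V →ₗ[ℂ] V := (A : H →ₗ[ℂ] H).restrict hmaps with hT
  have hsym : (A : H →ₗ[ℂ] H).IsSymmetric :=
    (ContinuousLinearMap.isSelfAdjoint_iff_isSymmetric).mp hsa
  have hTsym : T.IsSymmetric := by
    intro x y
    have := hsym (x : H) (y : H)
    simpa [hT, LinearMap.restrict_apply, Submodule.coe_inner] using this
  set n := Module.finrank ℂ V with hn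
  set b := hTsym.eigenvectorBasis rfl with hb
  set μ := hTsym.eigenvalues (n := n) rfl with hμ
  refine ⟨n, fun i => (b i : H), μ, ?_, ?_⟩
  · constructor
    · intro i
      have := b.orthonormal.1 i
      exact this
    · intro i j hij
      have := b.orthonormal.2 hij
      simpa [Submodule.coe_inner] using this
  · have key : ∀ v : V, A (v : H) = ∑ i, (μ i : ℂ) • ⟪((b i : V) : H), (v : H)⟫_ℂ • ((b i : V) : H) := by
      intro v
      have hv : (∑ i, ⟪b i, v⟫_ℂ • b i) = v := b.sum_repr' v
      have hTv : (T v : H) = A (v : H) := rfl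
      calc A (v : H) = (T v : H) := rfl
        _ = (T (∑ i, ⟪b i, v⟫_ℂ • b i) : H) := by rw [hv]
        _ = ((∑ i, ⟪b i, v⟫_ℂ • (T (b i))) : V) := by rw [map_sum]; simp_rw [map_smul]
        _ = ∑ i, (μ i : ℂ) • ⟪((b i : V) : H), (v : H)⟫_ℂ • ((b i : V) : H) := by
              rw [Submodule.coe_sum]
              refine Finset.sum_congr rfl fun i _ => ?_
              rw [hb, hμ, LinearMap.IsSymmetric.apply_eigenvectorBasis]
              push_cast
              rw [Submodule.coe_inner, smul_comm]
              norm_cast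
    ext x
    haveI : CompleteSpace V := FiniteDimensional.complete ℂ V
    have hw : x - (V.orthogonalProjectionOnto x : H) ∈ Vᗮ :=
      V.sub_starProjection_mem_orthogonal x
    set w := x - (V.orthogonalProjectionOnto x : H) with hwdef
    have hAw : A w = 0 := by
      have h1 : ⟪A w, A w⟫_ℂ = 0 := by
        have h2 : ⟪A w, A w⟫_ℂ = ⟪w, A (A w)⟫_ℂ := hsym w (A w)
        rw [h2, ← inner_conj_symm]
        rw [(Submodule.mem_orthogonal V w).mp hw (A (A w)) (LinearMap.mem_range_self _ _)]
        simp
      simpa using inner_self_eq_zero.mp h1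
    have hx : x = (V.orthogonalProjectionOnto x : H) + w := by
      show x = (V.orthogonalProjectionOnto x : H) + (x - (V.orthogonalProjectionOnto x : H))
      abel
    have hAx : A x = A (V.orthogonalProjectionOnto x : H) := by
      conv_lhs => rw [hx]
      rw [map_add, hAw, add_zero]
    have hinner : ∀ i, ⟪((b i : V) : H), x⟫_ℂ = ⟪((b i : V) : H), (V.orthogonalProjectionOnto x : H)⟫_ℂ := by
      intro i
      conv_lhs => rw [hx]
      rw [inner_add_right, (Submodule.mem_orthogonal V w).mp hw _ (b i).2, add_zero]
    rw [ContinuousLinearMap.sum_apply, hAx, key (V.orthogonalProjectionOnto x)]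
    refine Finset.sum_congr rfl fun i _ => ?_
    rw [ContinuousLinearMap.smul_apply, rankOne_apply, hinner i]

lemma mul_mem_left (A B : H →L[ℂ] H) (hA : A ∈ finiteRankOps H) :
    A * B ∈ finiteRankOps H := by
  haveI : FiniteDimensional ℂ (LinearMap.range (A : H →ₗ[ℂ] H)) := hA
  have hle : LinearMap.range ((A * B : H →L[ℂ] H) : H →ₗ[ℂ] H) ≤ LinearMap.range (A : H →ₗ[ℂ] H) := by
    rintro _ ⟨x, rfl⟩
    exact ⟨B x, rfl⟩
  exact Submodule.finiteDimensional_of_le hle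

lemma adjoint_mem [CompleteSpace H] (A : H →L[ℂ] H) (hA : A ∈ finiteRankOps H) :
    ContinuousLinearMap.adjoint A ∈ finiteRankOps H := by
  haveI : FiniteDimensional ℂ (LinearMap.range (A : H →ₗ[ℂ] H)) := hA
  set V : Submodule ℂ H := LinearMap.range (A : H →ₗ[ℂ] H) with hV
  haveI : CompleteSpace V := FiniteDimensional.complete ℂ V
  set B := ContinuousLinearMap.adjoint A with hB
  have hle : LinearMap.range (B : H →ₗ[ℂ] H) ≤ V.map (B : H →ₗ[ℂ] H) := by
    rintro _ ⟨x, rfl⟩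
    have hw : x - (V.orthogonalProjectionOnto x : H) ∈ Vᗮ :=
      V.sub_starProjection_mem_orthogonal x
    set w := x - (V.orthogonalProjectionOnto x : H) with hwdef
    have hBw : B w = 0 := by
      have h1 : ⟪B w, B w⟫_ℂ = 0 := by
        rw [hB, ContinuousLinearMap.adjoint_inner_left, ← inner_conj_symm,
          (Submodule.mem_orthogonal V w).mp hw (A (ContinuousLinearMap.adjoint A w))
            (LinearMap.mem_range_self (A : H →ₗ[ℂ] H) _)]
        simp
      exact inner_self_eq_zero.mp h1
    have hx : B x = B (V.orthogonalProjectionOnto x : H) := by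
      have : x = (V.orthogonalProjectionOnto x : H) + w := by rw [hwdef]; abel
      conv_lhs => rw [this]
      rw [map_add, hBw, add_zero]
    exact ⟨(V.orthogonalProjectionOnto x : H), (V.orthogonalProjectionOnto x).2, hx.symm⟩
  haveI : FiniteDimensional ℂ (V.map (B : H →ₗ[ℂ] H)) := inferInstance
  exact Submodule.finiteDimensional_of_le hle

section Phi
variable [CompleteSpace H] (φ : finiteRankOps H →ₗ[ℂ] (H →L[ℂ] H))
  (hproj : ∀ (P : H →L[ℂ] H) (hP : P ∈ finiteRankOps H),
      IsSelfAdjoint P → P * P = P → φ ⟨P, hP⟩ * φ ⟨P, hP⟩ = φ ⟨P, hP⟩)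

noncomputable def qq (e : H) : finiteRankOps H := ⟨rankOne e, rankOne_mem e⟩

include hproj

lemma phi_idem {e : H} (he : ‖e‖ = 1) : φ (qq e) * φ (qq e) = φ (qq e) :=
  hproj _ (rankOne_mem e) (rankOne_isSelfAdjoint e) (rankOne_mul_self e he)

lemma phi_anti {e f : H} (he : ‖e‖ = 1) (hf : ‖f‖ = 1) (hef : ⟪e, f⟫_ℂ = 0) :
    φ (qq e) * φ (qq f) + φ (qq f) * φ (qq e) = 0 := by
  have hfe : ⟪f, e⟫_ℂ = 0 := by rw [← inner_conj_symm, hef, map_zero]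
  have hPmem : rankOne e + rankOne f ∈ finiteRankOps H :=
    add_mem (rankOne_mem e) (rankOne_mem f)
  have hsa : IsSelfAdjoint (rankOne e + rankOne f) :=
    (rankOne_isSelfAdjoint e).add (rankOne_isSelfAdjoint f)
  have hidem : (rankOne e + rankOne f) * (rankOne e + rankOne f) = rankOne e + rankOne f := by
    rw [mul_add, add_mul, add_mul, rankOne_mul_self e he, rankOne_mul_self f hf,
      rankOne_mul_orth e f hef, rankOne_mul_orth f e hfe]
    abel
  have h := hproj _ hPmem hsa hidem
  have hq : (⟨rankOne e + rankOne f, hPmem⟩ : finiteRankOps H) = qq e + qq f := rfl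
  rw [hq, map_add] at h
  have he2 := phi_idem φ hproj he
  have hf2 := phi_idem φ hproj hf
  set x := φ (qq e) with hx
  set y := φ (qq f) with hy
  have hexp : x*x + (x*y + y*x) + y*y = x + y := by rw [← h]; noncomm_ring
  rw [he2, hf2] at hexp
  calc x*y + y*x = (x + (x*y + y*x) + y) - x - y := by abel
    _ = (x + y) - x - y := by rw [hexp]
    _ = 0 := by abel

lemma jordan_sa (A B : finiteRankOps H) (hsa : IsSelfAdjoint (A : H →L[ℂ] H))
    (hB : (B : H →L[ℂ] H) = (A : H →L[ℂ] H) * (A : H →L[ℂ] H)) :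
    φ B = φ A * φ A := by
  obtain ⟨n, e, μ, horth, hsum⟩ := exists_decomp (A : H →L[ℂ] H) A.2 hsa
  have hnorm : ∀ i, ‖e i‖ = 1 := fun i => by simpa using horth.1 i
  have horthij : ∀ i j, i ≠ j → ⟪e i, e j⟫_ℂ = 0 := fun i j hij => horth.2 hij
  have hA : A = ∑ i, (μ i : ℂ) • qq (e i) := by
    apply Subtype.ext
    simp only [Submodule.coe_sum, SetLike.val_smul, qq, hsum]
  set a : Fin n → Fin n → (H →L[ℂ] H) :=
    fun i j => ((μ i : ℂ) * (μ j : ℂ)) • (φ (qq (e i)) * φ (qq (e j)))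
  have hphiA : φ A = ∑ i, (μ i : ℂ) • φ (qq (e i)) := by
    rw [hA, map_sum]; simp_rw [map_smul]
  have hsq : φ A * φ A = ∑ i, ∑ j, a i j := by
    rw [hphiA, Finset.sum_mul_sum]
    simp_rw [smul_mul_smul_comm]
    rfl
  have hdiag : ∀ i j, i ≠ j → a i j + a j i = 0 := by
    intro i j hij
    have : a j i = ((μ i : ℂ) * (μ j : ℂ)) • (φ (qq (e j)) * φ (qq (e i))) := by
      rw [mul_comm]
    rw [this, ← smul_add, phi_anti φ hproj (hnorm i) (hnorm j) (horthij i j hij), smul_zero]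
  have key2 : (∑ i, ∑ j, a i j) + (∑ i, ∑ j, a i j) = (∑ i, a i i) + (∑ i, a i i) := by
    conv_lhs => rw [show (∑ i, ∑ j, a i j) + (∑ i, ∑ j, a i j)
      = (∑ i, ∑ j, a i j) + (∑ i, ∑ j, a j i) from by rw [Finset.sum_comm (f := fun i j => a j i)]]
    rw [← Finset.sum_add_distrib]
    simp_rw [← Finset.sum_add_distrib]
    rw [show (∑ i, ∑ j, (a i j + a j i)) = ∑ i, ∑ j, (if j = i then a i i + a i i else 0) from
      Finset.sum_congr rfl fun i _ => Finset.sum_congr rfl fun j _ => by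
        by_cases hij : j = i
        · subst hij; simp
        · rw [if_neg hij, hdiag i j (Ne.symm hij)]]
    simp_rw [Finset.sum_ite_eq' Finset.univ]
    simp [Finset.sum_add_distrib]
  have hsq2 : φ A * φ A = ∑ i, a i i := by
    have h2 : (2 : ℂ) • (∑ i, ∑ j, a i j) = (2 : ℂ) • (∑ i, a i i) := by
      rw [two_smul, two_smul]; exact key2
    rw [hsq]
    exact smul_right_injective _ (two_ne_zero) h2
  have hBdecomp : B = ∑ i, ((μ i : ℂ) * (μ i : ℂ)) • qq (e i) := by
    apply Subtype.ext
    simp only [Submodule.coe_sum, SetLike.val_smul, qq, hB, hsum]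
    rw [Finset.sum_mul_sum]
    simp_rw [smul_mul_smul_comm]
    have hstep : (∑ i, ∑ j, ((μ i : ℂ) * (μ j : ℂ)) • (rankOne (e i) * rankOne (e j)))
        = ∑ i, ∑ j, (if j = i then ((μ i : ℂ) * (μ i : ℂ)) • rankOne (e i) else 0) := by
      refine Finset.sum_congr rfl fun i _ => Finset.sum_congr rfl fun j _ => ?_
      by_cases hij : j = i
      · subst hij; rw [if_pos rfl, rankOne_mul_self _ (hnorm j)]
      · rw [if_neg hij, rankOne_mul_orth _ _ (horthij i j (Ne.symm hij)), smul_zero]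
    rw [hstep]
    simp_rw [Finset.sum_ite_eq' Finset.univ]
    simp
  rw [hBdecomp, map_sum, hsq2]
  refine Finset.sum_congr rfl fun i _ => ?_
  rw [map_smul]
  show ((μ i : ℂ) * (μ i : ℂ)) • φ (qq (e i)) = ((μ i : ℂ) * (μ i : ℂ)) • (φ (qq (e i)) * φ (qq (e i)))
  rw [phi_idem φ hproj (hnorm i)]

end Phi

lemma sq_expand {R : Type*} [Ring R] [Algebra ℂ R] (x y : R) :
    (x + Complex.I • y) * (x + Complex.I • y)
      = x*x - y*y + Complex.I • (x*y + y*x) := by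
  simp only [add_mul, mul_add, smul_mul_assoc, mul_smul_comm, smul_smul, Complex.I_mul_I,
    smul_add]
  module

theorem jordan_homomorphism_of_projections_to_idempotents'
    [CompleteSpace H]
    (φ : finiteRankOps H →ₗ[ℂ] (H →L[ℂ] H))
    (hproj : ∀ (P : H →L[ℂ] H) (hP : P ∈ finiteRankOps H),
      IsSelfAdjoint P → P * P = P → φ ⟨P, hP⟩ * φ ⟨P, hP⟩ = φ ⟨P, hP⟩) :
    ∀ A B : finiteRankOps H, (B : H →L[ℂ] H) = (A : H →L[ℂ] H) * (A : H →L[ℂ] H) →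
      φ B = φ A * φ A := by
  intro A B hB
  have hadj : ContinuousLinearMap.adjoint (A : H →L[ℂ] H) ∈ finiteRankOps H :=
    adjoint_mem _ A.2
  set Astar : finiteRankOps H := ⟨ContinuousLinearMap.adjoint (A : H →L[ℂ] H), hadj⟩
    with hAstar
  set S : finiteRankOps H := (1/2 : ℂ) • (A + Astar) with hS
  set T : finiteRankOps H := (-(Complex.I/2)) • (A - Astar) with hT
  have hScoe : (S : H →L[ℂ] H)
      = (1/2 : ℂ) • ((A : H →L[ℂ] H) + ContinuousLinearMap.adjoint (A : H →L[ℂ] H)) := rfl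
  have hTcoe : (T : H →L[ℂ] H)
      = (-(Complex.I/2)) • ((A : H →L[ℂ] H) - ContinuousLinearMap.adjoint (A : H →L[ℂ] H)) := rfl
  have hSsa : IsSelfAdjoint (S : H →L[ℂ] H) := by
    rw [IsSelfAdjoint, hScoe, star_smul, star_add, ContinuousLinearMap.star_eq_adjoint,
      ContinuousLinearMap.star_eq_adjoint, ContinuousLinearMap.adjoint_adjoint]
    have : star (1/2 : ℂ) = (1/2 : ℂ) := by simp
    rw [this, add_comm]
  have hTsa : IsSelfAdjoint (T : H →L[ℂ] H) := by
    rw [IsSelfAdjoint, hTcoe, star_smul, star_sub, ContinuousLinearMap.star_eq_adjoint,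
      ContinuousLinearMap.star_eq_adjoint, ContinuousLinearMap.adjoint_adjoint]
    have : star (-(Complex.I/2) : ℂ) = (Complex.I/2 : ℂ) := by
      simp only [star_neg, star_div₀, Complex.star_def, Complex.conj_I, map_ofNat]
      ring
    rw [this, smul_sub, smul_sub]
    module
  have hI : Complex.I * (-(Complex.I/2)) = 1/2 := by
    linear_combination (-1/2 : ℂ) * Complex.I_mul_I
  have hAST : A = S + Complex.I • T := by
    apply Subtype.ext
    push_cast [hScoe, hTcoe]
    rw [smul_smul, hI]
    module
  have hASTcoe : (A : H →L[ℂ] H) = (S : H →L[ℂ] H) + Complex.I • (T : H →L[ℂ] H) := by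
    rw [hAST]; push_cast; ring_nf
  set S2 : finiteRankOps H := ⟨(S : H →L[ℂ] H) * (S : H →L[ℂ] H), mul_mem_left _ _ S.2⟩
    with hS2
  set T2 : finiteRankOps H := ⟨(T : H →L[ℂ] H) * (T : H →L[ℂ] H), mul_mem_left _ _ T.2⟩
    with hT2
  set C : finiteRankOps H := ⟨(S : H →L[ℂ] H) * (T : H →L[ℂ] H)
      + (T : H →L[ℂ] H) * (S : H →L[ℂ] H),
      add_mem (mul_mem_left _ _ S.2) (mul_mem_left _ _ T.2)⟩ with hC
  have hS2eq : φ S2 = φ S * φ S := jordan_sa φ hproj S S2 hSsa rfl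
  have hT2eq : φ T2 = φ T * φ T := jordan_sa φ hproj T T2 hTsa rfl
  have hWsa : IsSelfAdjoint ((S + T : finiteRankOps H) : H →L[ℂ] H) := by
    push_cast
    exact hSsa.add hTsa
  set W2 : finiteRankOps H := ⟨((S + T : finiteRankOps H) : H →L[ℂ] H)
      * ((S + T : finiteRankOps H) : H →L[ℂ] H), mul_mem_left _ _ (S + T).2⟩ with hW2
  have hW2eq : φ W2 = φ (S + T) * φ (S + T) := jordan_sa φ hproj (S + T) W2 hWsa rfl
  have hW2decomp : W2 = S2 + T2 + C := by
    apply Subtype.ext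
    show ((S + T : finiteRankOps H) : H →L[ℂ] H) * ((S + T : finiteRankOps H) : H →L[ℂ] H)
      = (S : H →L[ℂ] H) * (S : H →L[ℂ] H) + (T : H →L[ℂ] H) * (T : H →L[ℂ] H)
        + ((S : H →L[ℂ] H) * (T : H →L[ℂ] H) + (T : H →L[ℂ] H) * (S : H →L[ℂ] H))
    push_cast
    noncomm_ring
  have hCeq : φ C = φ S * φ T + φ T * φ S := by
    have h1 : φ S2 + φ T2 + φ C = (φ S + φ T) * (φ S + φ T) := by
      rw [← map_add, ← map_add, ← hW2decomp, hW2eq, map_add]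
    rw [hS2eq, hT2eq] at h1
    calc φ C = (φ S * φ S + φ T * φ T + φ C) - φ S * φ S - φ T * φ T := by abel
      _ = (φ S + φ T) * (φ S + φ T) - φ S * φ S - φ T * φ T := by rw [h1]
      _ = φ S * φ T + φ T * φ S := by noncomm_ring
  have hBdecomp : B = S2 - T2 + Complex.I • C := by
    apply Subtype.ext
    push_cast
    rw [hB, hASTcoe]
    exact sq_expand _ _
  rw [hBdecomp, map_add, map_sub, map_smul, hS2eq, hT2eq, hCeq]
  have hphiA : φ A = φ S + Complex.I • φ T := by
    rw [hAST]
    simp only [map_add, map_smul]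
  rw [hphiA]
  exact (sq_expand _ _).symm

end Aux

theorem jordan_homomorphism_of_projections_to_idempotents
    {H : Type*} [NormedAddCommGroup H] [InnerProductSpace ℂ H] [CompleteSpace H]
    (hdim : 3 ≤ Module.rank ℂ H)
    (φ : finiteRankOps H →ₗ[ℂ] (H →L[ℂ] H))
    (hproj : ∀ (P : H →L[ℂ] H) (hP : P ∈ finiteRankOps H),
      IsSelfAdjoint P → P * P = P → φ ⟨P, hP⟩ * φ ⟨P, hP⟩ = φ ⟨P, hP⟩) :
    ∀ A B : finiteRankOps H, (B : H →L[ℂ] H) = (A : H →L[ℂ] H) * (A : H →L[ℂ] H) →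
      φ B = φ A * φ A := by
  exact jordan_homomorphism_of_projections_to_idempotents' φ hproj
end

section
/- Let H be a complex Hilbert space and let φ : F(H) → B(H) be a (not necessarily unital) ring homomorphism such that for every finite-rank orthogonal projection P on H, φ(P) is an idempotent whose rank equals the rank of P. Then φ preserves rank: for every A ∈ F(H), the rank of φ(A) equals the rank of A. -/
theorem rank_preserving_of_ring_hom
    {H : Type*} [NormedAddCommGroup H] [InnerProductSpace ℂ H] [CompleteSpace H]
    (φ : finiteRankOps H → (H →L[ℂ] H))
    (hadd : ∀ A B : finiteRankOps H, φ (A + B) = φ A + φ B)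
    (hmul : ∀ A B C : finiteRankOps H,
      (C : H →L[ℂ] H) = (A : H →L[ℂ] H) * (B : H →L[ℂ] H) → φ C = φ A * φ B)
    (hproj : ∀ (P : H →L[ℂ] H) (hP : P ∈ finiteRankOps H),
      IsSelfAdjoint P → P * P = P →
      φ ⟨P, hP⟩ * φ ⟨P, hP⟩ = φ ⟨P, hP⟩ ∧
      Module.rank ℂ (LinearMap.range (φ ⟨P, hP⟩ : H →ₗ[ℂ] H)) = Module.rank ℂ (LinearMap.range (P : H →ₗ[ℂ] H))) :
    ∀ A : finiteRankOps H,
      Module.rank ℂ (LinearMap.range (φ A : H →ₗ[ℂ] H)) =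
        Module.rank ℂ (LinearMap.range ((A : H →L[ℂ] H) : H →ₗ[ℂ] H)) := by
  rintro ⟨A, hA⟩
  haveI hR : FiniteDimensional ℂ (LinearMap.range ((A : H →L[ℂ] H) : H →ₗ[ℂ] H)) := hA
  set R := LinearMap.range ((A : H →L[ℂ] H) : H →ₗ[ℂ] H) with hRdef
  haveI : CompleteSpace R := FiniteDimensional.complete ℂ R
  -- the orthogonal projection onto the range of A
  let P : H →L[ℂ] H := R.subtypeL ∘L R.orthogonalProjectionOnto
  have hPx : ∀ x ∈ R, P x = x := by
    intro x hx
    exact Submodule.starProjection_eq_self_iff.mpr hx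
  have hPle : LinearMap.range ((P : H →L[ℂ] H) : H →ₗ[ℂ] H) ≤ R := by
    rintro _ ⟨x, rfl⟩
    exact (R.orthogonalProjectionOnto x).2
  have hPrange : LinearMap.range ((P : H →L[ℂ] H) : H →ₗ[ℂ] H) = R := by
    refine le_antisymm hPle fun x hx => ⟨x, hPx x hx⟩
  have hPmem : P ∈ finiteRankOps H := by
    show FiniteDimensional ℂ (LinearMap.range ((P : H →L[ℂ] H) : H →ₗ[ℂ] H))
    rw [hPrange]; exact hR
  have hPsa : IsSelfAdjoint P := isSelfAdjoint_starProjection R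
  have hPP : P * P = P := by
    ext x
    exact hPx _ ((R.orthogonalProjectionOnto x).2)
  obtain ⟨hidem, hrankP⟩ := hproj P hPmem hPsa hPP
  -- upper bound: P * A = A
  have hPA : (A : H →L[ℂ] H) = P * A := by
    ext x
    exact (hPx _ ⟨x, rfl⟩).symm
  have hup : Module.rank ℂ (LinearMap.range (φ ⟨A, hA⟩ : H →ₗ[ℂ] H)) ≤
      Module.rank ℂ (LinearMap.range ((A : H →L[ℂ] H) : H →ₗ[ℂ] H)) := by
    have h1 : φ ⟨A, hA⟩ = φ ⟨P, hPmem⟩ * φ ⟨A, hA⟩ := hmul ⟨P, hPmem⟩ ⟨A, hA⟩ ⟨A, hA⟩ hPA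
    have h2 : LinearMap.range (φ ⟨A, hA⟩ : H →ₗ[ℂ] H) ≤ LinearMap.range (φ ⟨P, hPmem⟩ : H →ₗ[ℂ] H) := by
      rw [h1]
      rintro _ ⟨x, rfl⟩
      exact ⟨(φ ⟨A, hA⟩) x, rfl⟩
    calc Module.rank ℂ (LinearMap.range (φ ⟨A, hA⟩ : H →ₗ[ℂ] H))
        ≤ Module.rank ℂ (LinearMap.range (φ ⟨P, hPmem⟩ : H →ₗ[ℂ] H)) := Submodule.rank_mono h2
      _ = Module.rank ℂ (LinearMap.range ((P : H →L[ℂ] H) : H →ₗ[ℂ] H)) := hrankP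
      _ = Module.rank ℂ R := by rw [hPrange]
  -- lower bound: construct a right inverse B with A * B = P
  haveI : FiniteDimensional ℂ (LinearMap.range ((A : H →L[ℂ] H) : H →ₗ[ℂ] H)) := hR
  obtain ⟨g, hg⟩ := LinearMap.exists_rightInverse_of_surjective
    ((A : H →L[ℂ] H).toLinearMap.rangeRestrict) (LinearMap.range_rangeRestrict _)
  have hgA : ∀ y : R, (A : H →L[ℂ] H) (g y) = (y : H) := by
    intro y
    have := congrFun (congrArg (fun f => f.toFun) hg) y
    exact congrArg Subtype.val this
  let B : H →L[ℂ] H := (LinearMap.toContinuousLinearMap g) ∘L (R.orthogonalProjectionOnto : H →L[ℂ] R)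
  have hBmem : B ∈ finiteRankOps H := by
    show FiniteDimensional ℂ (LinearMap.range ((B : H →L[ℂ] H) : H →ₗ[ℂ] H))
    have hle : LinearMap.range ((B : H →L[ℂ] H) : H →ₗ[ℂ] H) ≤ LinearMap.range g := by
      rintro _ ⟨x, rfl⟩
      refine ⟨R.orthogonalProjectionOnto x, ?_⟩
      rfl
    exact Submodule.finiteDimensional_of_le hle
  have hAB : P = (A : H →L[ℂ] H) * B := by
    ext z
    show P z = (A : H →L[ℂ] H) (B z)
    have hBz : B z = g (R.orthogonalProjectionOnto z) := rfl
    rw [hBz, hgA]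
    rfl
  have hlow : Module.rank ℂ R ≤ Module.rank ℂ (LinearMap.range (φ ⟨A, hA⟩ : H →ₗ[ℂ] H)) := by
    have h1 : φ ⟨P, hPmem⟩ = φ ⟨A, hA⟩ * φ ⟨B, hBmem⟩ := hmul ⟨A, hA⟩ ⟨B, hBmem⟩ ⟨P, hPmem⟩ hAB
    have h2 : LinearMap.range (φ ⟨P, hPmem⟩ : H →ₗ[ℂ] H) ≤ LinearMap.range (φ ⟨A, hA⟩ : H →ₗ[ℂ] H) := by
      rw [h1]
      rintro _ ⟨x, rfl⟩
      exact ⟨(φ ⟨B, hBmem⟩) x, rfl⟩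
    calc Module.rank ℂ R
        = Module.rank ℂ (LinearMap.range ((P : H →L[ℂ] H) : H →ₗ[ℂ] H)) := by rw [hPrange]
      _ = Module.rank ℂ (LinearMap.range (φ ⟨P, hPmem⟩ : H →ₗ[ℂ] H)) := hrankP.symm
      _ ≤ Module.rank ℂ (LinearMap.range (φ ⟨A, hA⟩ : H →ₗ[ℂ] H)) := Submodule.rank_mono h2
  exact le_antisymm hup hlow
end

section
/- Let H be a complex Hilbert space and let E, F be bounded idempotent linear operators on H (E² = E, F² = F) such that E + F is an idempotent of rank one. Then E = 0 or F = 0. -/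
/-
STATEMENT 15: If E, F are bounded idempotents whose sum is a rank-one
idempotent, then E = 0 or F = 0.
-/

theorem idempotent_summands_of_rank_one_idempotent
    {H : Type*} [NormedAddCommGroup H] [InnerProductSpace ℂ H] [CompleteSpace H]
    (E F : H →L[ℂ] H)
    (hE : E * E = E) (hF : F * F = F)
    (hEF : (E + F) * (E + F) = E + F)
    (hrank : Module.finrank ℂ (LinearMap.range ((E + F : H →L[ℂ] H) : H →ₗ[ℂ] H)) = 1) :
    E = 0 ∨ F = 0 := by
  -- From the idempotent equation: E*F + F*E = 0
  have hsum : E * F + F * E = 0 := by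
    have h := hEF
    rw [mul_add, add_mul, add_mul, hE, hF] at h
    calc E * F + F * E = (E + F * E + (E * F + F)) - (E + F) := by abel
    _ = 0 := by rw [h, sub_self]
  -- E*F = F*E
  have hcomm : E * F = F * E := by
    have h1 : E * F + E * F * E = 0 := by
      have := congrArg (fun X => E * X) hsum
      simpa [mul_add, ← mul_assoc, hE] using this
    have h2 : E * F * E + F * E = 0 := by
      have := congrArg (fun X => X * E) hsum
      simpa [add_mul, mul_assoc, hE] using this
    rw [eq_neg_of_add_eq_zero_left h1, eq_neg_of_add_eq_zero_right h2]
  have hEF0 : E * F = 0 := by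
    have h2 : (2 : ℂ) • (E * F) = 0 := by
      rw [← hcomm] at hsum
      rw [two_smul]; exact hsum
    have := smul_eq_zero.mp h2
    simpa using this
  have hFE0 : F * E = 0 := by rw [← hcomm]; exact hEF0
  by_contra hcon
  push_neg at hcon
  obtain ⟨hEne, hFne⟩ := hcon
  obtain ⟨x, hx⟩ : ∃ x, E x ≠ 0 := by
    by_contra h; push_neg at h
    exact hEne (ContinuousLinearMap.ext fun x => by simp [h x])
  obtain ⟨y, hy⟩ : ∃ y, F y ≠ 0 := by
    by_contra h; push_neg at h
    exact hFne (ContinuousLinearMap.ext fun y => by simp [h y])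
  set S := LinearMap.range ((E + F : H →L[ℂ] H) : H →ₗ[ℂ] H) with hS
  have huS : E x ∈ S := by
    refine ⟨E x, ?_⟩
    have h1 : E (E x) = E x := by
      have := congrFun (congrArg DFunLike.coe hE) x
      simpa using this
    have h2 : F (E x) = 0 := by
      have := congrFun (congrArg DFunLike.coe hFE0) x
      simpa using this
    simp [h1, h2]
  have hwS : F y ∈ S := by
    refine ⟨F y, ?_⟩
    have h1 : F (F y) = F y := by
      have := congrFun (congrArg DFunLike.coe hF) y
      simpa using this
    have h2 : E (F y) = 0 := by
      have := congrFun (congrArg DFunLike.coe hEF0) y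
      simpa using this
    simp [h1, h2]
  -- In a 1-dimensional space, F y = c • E x
  have hune : (⟨E x, huS⟩ : S) ≠ 0 := by
    intro h
    exact hx (by simpa using congrArg (Subtype.val) h)
  have hspan : Submodule.span ℂ {(⟨E x, huS⟩ : S)} = ⊤ :=
    (finrank_eq_one_iff_of_nonzero _ hune).mp hrank
  have hmem : (⟨F y, hwS⟩ : S) ∈ Submodule.span ℂ {(⟨E x, huS⟩ : S)} := by
    rw [hspan]; trivial
  obtain ⟨c, hc⟩ := Submodule.mem_span_singleton.mp hmem
  have hc' : c • E x = F y := congrArg Subtype.val hc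
  -- Apply E: E (F y) = 0 but E (c • E x) = c • E x
  have hEFy : E (F y) = 0 := by
    have := congrFun (congrArg DFunLike.coe hEF0) y
    simpa using this
  have hEEx : E (E x) = E x := by
    have := congrFun (congrArg DFunLike.coe hE) x
    simpa using this
  have : c • E x = 0 := by
    calc c • E x = E (c • E x) := by rw [map_smul, hEEx]
    _ = E (F y) := by rw [hc']
    _ = 0 := hEFy
  rcases smul_eq_zero.mp this with h | h
  · rw [h, zero_smul] at hc'
    exact hy hc'.symm
  · exact hx h
end

section
/- Let H be a complex Hilbert space with dim H ≥ 3, let φ₁ : F(H) → B(H) be a ring homomorphism and φ₂ : F(H) → B(H) a ring antihomomorphism (additive with φ₂(AB) = φ₂(B)φ₂(A)) such that for every rank-one orthogonal projection P on H, φ₁(P) + φ₂(P) is a rank-one idempotent. Then φ₁ = 0 or φ₂ = 0. -/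
open scoped InnerProductSpace

section Aux
variable {H : Type*} [NormedAddCommGroup H] [InnerProductSpace ℂ H]

/-- rank-one operator x ↦ ⟪v,x⟫ • u -/
noncomputable def rk1 (u v : H) : H →L[ℂ] H :=
  (ContinuousLinearMap.toSpanSingleton ℂ u).comp (innerSL ℂ v)

lemma rk1_apply (u v x : H) : rk1 u v x = ⟪v, x⟫_ℂ • u := rfl

lemma rk1_mem (u v : H) : rk1 u v ∈ finiteRankOps H := by
  have hle : LinearMap.range (rk1 u v : H →ₗ[ℂ] H) ≤ Submodule.span ℂ {u} := by
    rintro _ ⟨x, rfl⟩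
    exact Submodule.smul_mem _ _ (Submodule.mem_span_singleton_self u)
  haveI : FiniteDimensional ℂ (Submodule.span ℂ ({u} : Set H)) := by
    infer_instance
  exact Submodule.finiteDimensional_of_le hle

variable [CompleteSpace H]

lemma vanish (p : H) (hp : ‖p‖ = 1)
    (φ : finiteRankOps H → (H →L[ℂ] H))
    (hadd : ∀ A B : finiteRankOps H, φ (A + B) = φ A + φ B)
    (hm : ∀ A B C : finiteRankOps H,
      (C : H →L[ℂ] H) = (A : H →L[ℂ] H) * (B : H →L[ℂ] H) →
      φ C = φ A * φ B ∨ φ C = φ B * φ A)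
    (hP : φ ⟨rk1 p p, rk1_mem p p⟩ = 0) :
    ∀ A : finiteRankOps H, φ A = 0 := by
  have hpp : ⟪p, p⟫_ℂ = 1 := by
    rw [inner_self_eq_norm_sq_to_K, hp]; norm_num
  have hzero : φ 0 = 0 := by
    have := hadd 0 0
    simpa using this.symm
  have hsum : ∀ {n : ℕ} (f : Fin n → finiteRankOps H),
      φ (∑ i, f i) = ∑ i, φ (f i) := by
    intro n f
    induction n with
    | zero => simpa using hzero
    | succ m ih =>
        rw [Fin.sum_univ_castSucc, Fin.sum_univ_castSucc, hadd, ih]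
  intro A
  haveI hfd : FiniteDimensional ℂ (LinearMap.range ((A : H →L[ℂ] H) : H →ₗ[ℂ] H)) := A.2
  set V := LinearMap.range ((A : H →L[ℂ] H) : H →ₗ[ℂ] H) with hV
  let b := stdOrthonormalBasis ℂ V
  set n := Module.finrank ℂ V
  -- the rank-one pieces
  let w : Fin n → H := fun i => ContinuousLinearMap.adjoint (A : H →L[ℂ] H) (b i : H)
  let T : Fin n → finiteRankOps H := fun i => ⟨rk1 (b i : H) (w i), rk1_mem _ _⟩
  let X : Fin n → finiteRankOps H := fun i => ⟨rk1 (b i : H) p, rk1_mem _ _⟩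
  let Y : Fin n → finiteRankOps H := fun i => ⟨rk1 p (w i), rk1_mem _ _⟩
  have hYfac : ∀ i, ((Y i : finiteRankOps H) : H →L[ℂ] H) =
      (rk1 p p) * ((Y i : finiteRankOps H) : H →L[ℂ] H) := by
    intro i
    ext x
    show ⟪w i, x⟫_ℂ • p = rk1 p p (⟪w i, x⟫_ℂ • p)
    rw [map_smul, rk1_apply, hpp, one_smul]
  have hYzero : ∀ i, φ (Y i) = 0 := by
    intro i
    rcases hm ⟨rk1 p p, rk1_mem p p⟩ (Y i) (Y i) (hYfac i) with h | h <;>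
      rw [h, hP] <;> simp
  have hTfac : ∀ i, ((T i : finiteRankOps H) : H →L[ℂ] H) =
      ((X i : finiteRankOps H) : H →L[ℂ] H) * ((Y i : finiteRankOps H) : H →L[ℂ] H) := by
    intro i
    ext x
    show ⟪w i, x⟫_ℂ • (b i : H) = rk1 (b i : H) p (⟪w i, x⟫_ℂ • p)
    rw [map_smul, rk1_apply, hpp, one_smul]
  have hTzero : ∀ i, φ (T i) = 0 := by
    intro i
    rcases hm (X i) (Y i) (T i) (hTfac i) with h | h <;>
      rw [h, hYzero] <;> simp
  have hdecomp : A = ∑ i, T i := by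
    apply Subtype.ext
    have : ((∑ i, T i : finiteRankOps H) : H →L[ℂ] H) = ∑ i, rk1 (b i : H) (w i) := by
      push_cast
      rfl
    rw [this]
    ext x
    rw [ContinuousLinearMap.sum_apply]
    have hmem : (A : H →L[ℂ] H) x ∈ V := LinearMap.mem_range_self _ x
    have hrepr := b.sum_repr ⟨(A : H →L[ℂ] H) x, hmem⟩
    calc (A : H →L[ℂ] H) x = ((⟨(A : H →L[ℂ] H) x, hmem⟩ : V) : H) := rfl
      _ = ((∑ i, b.repr ⟨(A : H →L[ℂ] H) x, hmem⟩ i • b i : V) : H) := by rw [hrepr]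
      _ = ∑ i, b.repr ⟨(A : H →L[ℂ] H) x, hmem⟩ i • (b i : H) := by
          push_cast; rfl
      _ = ∑ i, rk1 (b i : H) (w i) x := by
          refine Finset.sum_congr rfl fun i _ => ?_
          rw [b.repr_apply_apply, rk1_apply]
          congr 1
          rw [Submodule.coe_inner]
          exact (ContinuousLinearMap.adjoint_inner_left (A : H →L[ℂ] H) x (b i : H)).symm
  rw [hdecomp, hsum]
  exact Finset.sum_eq_zero fun i _ => hTzero i

end Aux

theorem hom_or_antihom_vanishes
    {H : Type*} [NormedAddCommGroup H] [InnerProductSpace ℂ H] [CompleteSpace H]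
    (hdim : 3 ≤ Module.rank ℂ H)
    (φ₁ φ₂ : finiteRankOps H → (H →L[ℂ] H))
    (hadd₁ : ∀ A B : finiteRankOps H, φ₁ (A + B) = φ₁ A + φ₁ B)
    (hmul₁ : ∀ A B C : finiteRankOps H,
      (C : H →L[ℂ] H) = (A : H →L[ℂ] H) * (B : H →L[ℂ] H) → φ₁ C = φ₁ A * φ₁ B)
    (hadd₂ : ∀ A B : finiteRankOps H, φ₂ (A + B) = φ₂ A + φ₂ B)
    (hmul₂ : ∀ A B C : finiteRankOps H,
      (C : H →L[ℂ] H) = (A : H →L[ℂ] H) * (B : H →L[ℂ] H) → φ₂ C = φ₂ B * φ₂ A)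
    (hproj : ∀ (P : H →L[ℂ] H) (hP : P ∈ finiteRankOps H),
      IsSelfAdjoint P → P * P = P → Module.finrank ℂ (LinearMap.range (P : H →ₗ[ℂ] H)) = 1 →
      (φ₁ ⟨P, hP⟩ + φ₂ ⟨P, hP⟩) * (φ₁ ⟨P, hP⟩ + φ₂ ⟨P, hP⟩) =
          φ₁ ⟨P, hP⟩ + φ₂ ⟨P, hP⟩ ∧
      Module.finrank ℂ (LinearMap.range
        ((φ₁ ⟨P, hP⟩ + φ₂ ⟨P, hP⟩ : H →L[ℂ] H) : H →ₗ[ℂ] H)) = 1) :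
    (∀ A : finiteRankOps H, φ₁ A = 0) ∨ (∀ A : finiteRankOps H, φ₂ A = 0) := by
  -- obtain a unit vector
  have hnt : ∃ x : H, x ≠ 0 := by
    by_contra h
    push_neg at h
    haveI : Subsingleton H := ⟨fun a b => by rw [h a, h b]⟩
    have : Module.rank ℂ H = 0 := rank_subsingleton' ℂ H
    rw [this] at hdim
    exact absurd (hdim.trans_lt (by norm_num)) (lt_irrefl _)
  obtain ⟨x, hx⟩ := hnt
  set p : H := ‖x‖⁻¹ • x with hpdef
  have hp : ‖p‖ = 1 := by
    rw [hpdef, norm_smul, norm_inv, norm_norm,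
      inv_mul_cancel₀ (norm_ne_zero_iff.mpr hx)]
  have hpne : p ≠ 0 := by
    intro h; rw [h, norm_zero] at hp; norm_num at hp
  have hpp : ⟪p, p⟫_ℂ = 1 := by
    rw [inner_self_eq_norm_sq_to_K, hp]; norm_num
  set P : H →L[ℂ] H := rk1 p p with hPdef
  have hPmem : P ∈ finiteRankOps H := rk1_mem p p
  -- P is a self-adjoint rank-one idempotent
  have hPsa : IsSelfAdjoint P := by
    rw [ContinuousLinearMap.isSelfAdjoint_iff_isSymmetric]
    intro u v
    show ⟪⟪p, u⟫_ℂ • p, v⟫_ℂ = ⟪u, ⟪p, v⟫_ℂ • p⟫_ℂ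
    rw [inner_smul_left, inner_smul_right, inner_conj_symm]
    ring
  have hPidem : P * P = P := by
    ext u
    show P (⟪p, u⟫_ℂ • p) = ⟪p, u⟫_ℂ • p
    rw [map_smul, hPdef, rk1_apply, hpp, one_smul]
  have hPrange : LinearMap.range (P : H →ₗ[ℂ] H) = Submodule.span ℂ {p} := by
    apply le_antisymm
    · rintro _ ⟨u, rfl⟩
      exact Submodule.smul_mem _ _ (Submodule.mem_span_singleton_self p)
    · rw [Submodule.span_singleton_le_iff_mem]
      exact ⟨p, by show P p = p; rw [hPdef, rk1_apply, hpp, one_smul]⟩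
  have hPrank : Module.finrank ℂ (LinearMap.range (P : H →ₗ[ℂ] H)) = 1 := by
    rw [hPrange]; exact finrank_span_singleton hpne
  obtain ⟨hidem, hrank⟩ := hproj P hPmem hPsa hPidem hPrank
  set A := φ₁ ⟨P, hPmem⟩ with hAdef
  set B := φ₂ ⟨P, hPmem⟩ with hBdef
  have hA2 : A * A = A := (hmul₁ ⟨P, hPmem⟩ ⟨P, hPmem⟩ ⟨P, hPmem⟩ hPidem.symm).symm
  have hB2 : B * B = B := (hmul₂ ⟨P, hPmem⟩ ⟨P, hPmem⟩ ⟨P, hPmem⟩ hPidem.symm).symm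
  have hABBA : A * B + B * A = 0 := by
    have h1 : A + (A * B + B * A) + B = A + B := by
      have h0 : (A + B) * (A + B) = A + (A * B + B * A) + B := by
        rw [add_mul, mul_add, mul_add, hA2, hB2]; abel
      rw [← h0, hidem]
    have h2 : A * B + B * A = (A + (A * B + B * A) + B) - (A + B) := by abel
    rw [h2, h1, sub_self]
  have hBA' : B * A = -(A * B) := by
    have := hABBA
    linear_combination (norm := abel) this
  have hAB : A * B = 0 := by
    have e1 : A * B * A = -(A * B) := by
      rw [mul_assoc, hBA', mul_neg, ← mul_assoc, hA2]
    have e2 : A * B * A = A * B := by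
      have hAB' : A * B = -(B * A) := by rw [hBA', neg_neg]
      rw [hAB', neg_mul, mul_assoc, hA2, ← hAB']
    have e3 : A * B = -(A * B) := e2.symm.trans e1
    have e4 : (2 : ℂ) • (A * B) = 0 := by
      rw [two_smul]
      nth_rewrite 2 [e3]
      exact add_neg_cancel _
    have := smul_eq_zero.mp e4
    rcases this with h | h
    · norm_num at h
    · exact h
  have hBA : B * A = 0 := by rw [hBA', hAB, neg_zero]
  -- rank considerations
  haveI hW : FiniteDimensional ℂ (LinearMap.range ((A + B : H →L[ℂ] H) : H →ₗ[ℂ] H)) :=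
    FiniteDimensional.of_finrank_pos (by rw [hrank]; norm_num)
  have hAle : LinearMap.range (A : H →ₗ[ℂ] H) ≤ LinearMap.range ((A + B : H →L[ℂ] H) : H →ₗ[ℂ] H) := by
    rintro _ ⟨u, rfl⟩
    refine ⟨A u, ?_⟩
    show (A + B) (A u) = A u
    have : (A + B) (A u) = (A * A) u + (B * A) u := rfl
    rw [this, hA2, hBA]
    simp
  have hBle : LinearMap.range (B : H →ₗ[ℂ] H) ≤ LinearMap.range ((A + B : H →L[ℂ] H) : H →ₗ[ℂ] H) := by
    rintro _ ⟨u, rfl⟩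
    refine ⟨B u, ?_⟩
    show (A + B) (B u) = B u
    have : (A + B) (B u) = (A * B) u + (B * B) u := rfl
    rw [this, hB2, hAB]
    simp
  haveI : FiniteDimensional ℂ (LinearMap.range (A : H →ₗ[ℂ] H)) := Submodule.finiteDimensional_of_le hAle
  haveI : FiniteDimensional ℂ (LinearMap.range (B : H →ₗ[ℂ] H)) := Submodule.finiteDimensional_of_le hBle
  have hinf : LinearMap.range (A : H →ₗ[ℂ] H) ⊓ LinearMap.range (B : H →ₗ[ℂ] H) = ⊥ := by
    rw [eq_bot_iff]
    rintro z ⟨⟨u, hu⟩, ⟨v, hv⟩⟩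
    simp only [ContinuousLinearMap.coe_coe] at hu hv
    have h1 : A z = z := by rw [← hu, ← ContinuousLinearMap.mul_apply, hA2]
    have h2 : A z = 0 := by rw [← hv, ← ContinuousLinearMap.mul_apply, hAB]; rfl
    rw [Submodule.mem_bot, ← h1, h2]
  have hsum : Module.finrank ℂ (LinearMap.range (A : H →ₗ[ℂ] H)) + Module.finrank ℂ (LinearMap.range (B : H →ₗ[ℂ] H)) ≤ 1 := by
    have := Submodule.finrank_sup_add_finrank_inf_eq (LinearMap.range (A : H →ₗ[ℂ] H)) (LinearMap.range (B : H →ₗ[ℂ] H))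
    rw [hinf] at this
    simp only [finrank_bot, add_zero] at this
    rw [← this]
    have hle := sup_le hAle hBle
    calc Module.finrank ℂ ↥(LinearMap.range (A : H →ₗ[ℂ] H) ⊔ LinearMap.range (B : H →ₗ[ℂ] H))
        ≤ Module.finrank ℂ (LinearMap.range ((A + B : H →L[ℂ] H) : H →ₗ[ℂ] H)) := Submodule.finrank_mono hle
      _ = 1 := hrank
  have hzero : A = 0 ∨ B = 0 := by
    have : Module.finrank ℂ (LinearMap.range (A : H →ₗ[ℂ] H)) = 0 ∨
        Module.finrank ℂ (LinearMap.range (B : H →ₗ[ℂ] H)) = 0 := by omega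
    rcases this with h | h
    · left
      have hbot : LinearMap.range (A : H →ₗ[ℂ] H) = ⊥ := Submodule.finrank_eq_zero.mp h
      ext u
      have hm : A u ∈ LinearMap.range (A : H →ₗ[ℂ] H) := LinearMap.mem_range_self _ u
      rw [hbot, Submodule.mem_bot] at hm
      rw [ContinuousLinearMap.zero_apply]
      exact hm
    · right
      have hbot : LinearMap.range (B : H →ₗ[ℂ] H) = ⊥ := Submodule.finrank_eq_zero.mp h
      ext u
      have hm : B u ∈ LinearMap.range (B : H →ₗ[ℂ] H) := LinearMap.mem_range_self _ u
      rw [hbot, Submodule.mem_bot] at hm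
      rw [ContinuousLinearMap.zero_apply]
      exact hm
  rcases hzero with h | h
  · left
    exact vanish p hp φ₁ hadd₁ (fun A B C hC => Or.inl (hmul₁ A B C hC)) h
  · right
    exact vanish p hp φ₂ hadd₂ (fun A B C hC => Or.inr (hmul₂ A B C hC)) h
end

section
/- Let H be a complex Hilbert space, let A be a bounded invertible linear operator on H, let U be a bounded linear operator on H, and let φ : H → ℂ be a function such that |φ(x)| · |φ(y)| · |⟨AUx, Uy⟩| = |⟨Ax, y⟩| for all x, y ∈ H. Then for every x ∈ H the vectors U*AUx and Ax are linearly dependent (equivalently, {U*AUx}^⊥ = {Ax}^⊥ for every x ∈ H). -/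
/-
STATEMENT 17: If |φ(x)|·|φ(y)|·|⟨AUx, Uy⟩| = |⟨Ax, y⟩| for all x, y, then the
vectors U*AUx and Ax are linearly dependent for every x.
-/

local notation "⟪" x ", " y "⟫" => @inner ℂ _ _ x y

open ContinuousLinearMap

theorem locally_linearly_dependent
    {H : Type*} [NormedAddCommGroup H] [InnerProductSpace ℂ H] [CompleteSpace H]
    (A : H ≃L[ℂ] H) (U : H →L[ℂ] H) (φ : H → ℂ)
    (h : ∀ x y : H, ‖φ x‖ * ‖φ y‖ * ‖⟪A (U x), U y⟫‖ = ‖⟪A x, y⟫‖) :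
    ∀ x : H, ∃ c : ℂ,
      (adjoint U) (A (U x)) = c • ((A : H →L[ℂ] H) x) ∨
      (A : H →L[ℂ] H) x = c • ((adjoint U) (A (U x))) := by
  intro x
  set v : H := (adjoint U) (A (U x)) with hv
  set w : H := (A : H →L[ℂ] H) x with hw
  have key : ∀ y : H, ⟪v, y⟫ = 0 → ⟪w, y⟫ = 0 := by
    intro y hy
    have hvy : ⟪A (U x), U y⟫ = 0 := by
      rw [← hy, hv, adjoint_inner_left]
    have := h x y
    rw [hvy] at this
    simp at this
    exact norm_eq_zero.mp this.symm
  have hmem : w ∈ (ℂ ∙ v)ᗮᗮ := by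
    intro u hu
    have hvu : ⟪v, u⟫ = 0 := hu v (Submodule.mem_span_singleton_self v)
    have hwu : ⟪w, u⟫ = 0 := key u hvu
    rw [← inner_conj_symm, hwu, map_zero]
  rw [Submodule.orthogonal_orthogonal] at hmem
  obtain ⟨c, hc⟩ := Submodule.mem_span_singleton.mp hmem
  exact ⟨c, Or.inr hc.symm⟩
end
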